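/- arXiv:2605.16828 — 3 statements merged into one kernel-verified Lean document; each statement's English description precedes it below -/
import Mathlib

section
/- Let G be a DAG with distinguished nodes Y and E, where E is a source node (no parents) and E is not a parent of Y. Define CH_int(Y) = CH(Y) ∩ CH(E) and D = CH_int(Y) ∪ DE(CH_int(Y)) (the intervened children of Y together with their descendants). Let SB(Y) = PA(Y) ∪ (CH(Y) \ D) ∪ PA(CH(Y) \ D). Then Y and E are d-separated given SB(Y) in G. -/
/-- A (finite) walk with no repeated vertices, given as a function `p : ℕ → V` on `{0,...,n}`,
whose consecutive vertices are adjacent in the digraph `adj` in either direction. -/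
def IsTrail {V : Type*} (adj : V → V → Prop) (p : ℕ → V) (n : ℕ) : Prop :=
  (∀ i, i < n → (adj (p i) (p (i + 1)) ∨ adj (p (i + 1)) (p i))) ∧
  (∀ i j, i ≤ n → j ≤ n → p i = p j → i = j)

/-- Internal vertex `i` of the trail is a collider: both neighboring edges point into it. -/
def IsCollider {V : Type*} (adj : V → V → Prop) (p : ℕ → V) (i : ℕ) : Prop :=
  adj (p (i - 1)) (p i) ∧ adj (p (i + 1)) (p i)

/-- A trail is blocked by `S` if it contains a non-collider in `S`, or a collider such that
neither it nor any of its descendants is in `S`. -/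
def Blocked {V : Type*} (adj : V → V → Prop) (p : ℕ → V) (n : ℕ) (S : Set V) : Prop :=
  ∃ i, 0 < i ∧ i < n ∧
    ((¬ IsCollider adj p i ∧ p i ∈ S) ∨
     (IsCollider adj p i ∧ p i ∉ S ∧ ∀ w, Relation.TransGen adj (p i) w → w ∉ S))

/-- d-separation of `a` and `b` given `S`: every trail from `a` to `b` is blocked by `S`. -/
def DSep {V : Type*} (adj : V → V → Prop) (a b : V) (S : Set V) : Prop :=
  ∀ (n : ℕ) (p : ℕ → V), IsTrail adj p n → p 0 = a → p n = b → Blocked adj p n S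

/-- The stable blanket `SB(Y) = PA(Y) ∪ (CH(Y) \ D) ∪ PA(CH(Y) \ D)`, where
`D = CH_int(Y) ∪ DE(CH_int(Y))` and `CH_int(Y) = CH(Y) ∩ CH(E)`, d-separates `Y` from `E`. -/
theorem stmt5 {V : Type*} (adj : V → V → Prop) (Y E : V)
    (hacyc : ∀ v, ¬ Relation.TransGen adj v v)
    (hsource : ∀ v, ¬ adj v E)
    (hEY : ¬ adj E Y) (hne : Y ≠ E) :
    DSep adj Y E
      (({w | adj w Y} ∪
        ({w | adj Y w} \
          ({v | adj Y v ∧ adj E v} ∪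
           {w | ∃ v, (adj Y v ∧ adj E v) ∧ Relation.TransGen adj v w})) ∪
        {w | ∃ c, (c ∈ {w | adj Y w} \
          ({v | adj Y v ∧ adj E v} ∪
           {w | ∃ v, (adj Y v ∧ adj E v) ∧ Relation.TransGen adj v w})) ∧ adj w c})) := by
  classical
  set D : Set V := {v | adj Y v ∧ adj E v} ∪
      {w | ∃ v, (adj Y v ∧ adj E v) ∧ Relation.TransGen adj v w} with hD
  set S : Set V := {w | adj w Y} ∪ ({w | adj Y w} \ D) ∪
      {w | ∃ c, (c ∈ {w | adj Y w} \ D) ∧ adj w c} with hS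
  -- no 2-cycles
  have h2c : ∀ a b, adj a b → ¬ adj b a := fun a b h1 h2 =>
    hacyc a (Relation.TransGen.head h1 (Relation.TransGen.single h2))
  -- every element of D is a descendant of Y
  have hDY : ∀ v ∈ D, Relation.TransGen adj Y v := by
    rw [hD]
    rintro v (⟨h1, _⟩ | ⟨u, ⟨hu1, _⟩, huv⟩)
    · exact Relation.TransGen.single h1
    · exact Relation.TransGen.head hu1 huv
  -- D is closed under descendants
  have hDc : ∀ v ∈ D, ∀ w, Relation.TransGen adj v w → w ∈ D := by
    rw [hD]
    rintro v (⟨h1, h2⟩ | ⟨u, hu, huv⟩) w hw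
    · exact Or.inr ⟨v, ⟨h1, h2⟩, hw⟩
    · exact Or.inr ⟨u, hu, huv.trans hw⟩
  -- D and S are disjoint
  have hDS : ∀ v ∈ D, v ∉ S := by
    rw [hS]
    rintro v hv ((h | ⟨_, hnD⟩) | ⟨c, ⟨_, hcD⟩, hvc⟩)
    · exact hacyc Y (Relation.TransGen.tail (hDY v hv) h)
    · exact hnD hv
    · exact hcD (hDc v hv c (Relation.TransGen.single hvc))
  intro n p htrail h0 hn
  obtain ⟨hadj, _⟩ := htrail
  have hn0 : n ≠ 0 := by rintro rfl; exact hne (h0.symm.trans hn)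
  have hn2 : 2 ≤ n := by
    rcases Nat.lt_or_ge n 2 with h | h
    · interval_cases n
      · exact absurd rfl hn0
      · rcases hadj 0 (by omega) with h | h
        · rw [h0, hn] at h; exact absurd h (hsource Y)
        · rw [h0, hn] at h; exact absurd h hEY
    · exact h
  rcases hadj 0 (by omega) with hYp1 | hp1Y
  · rw [h0] at hYp1
    -- first edge Y → p 1
    by_cases hD1 : p 1 ∈ D
    · -- p 1 ∈ D : find first backward edge, it is a collider in D
      have hex : ∃ j, j + 1 ≤ n ∧ adj (p (j + 1)) (p j) := by
        refine ⟨n - 1, by omega, ?_⟩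
        have hm : n - 1 + 1 = n := by omega
        rcases hadj (n - 1) (by omega) with h | h
        · rw [hm, hn] at h; exact absurd h (hsource _)
        · exact h
      set i := Nat.find hex with hi
      obtain ⟨hin, hback⟩ := Nat.find_spec hex
      rw [← hi] at hin hback
      have hipos : 1 ≤ i := by
        rcases Nat.eq_zero_or_pos i with h | h
        · exfalso
          rw [h] at hback
          rw [h0] at hback
          exact h2c Y (p 1) hYp1 hback
        · exact h
      have hfwd : ∀ j, j < i → adj (p j) (p (j + 1)) := by
        intro j hj
        rcases hadj j (by omega) with h | h
        · exact h
        · exact absurd ⟨by omega, h⟩ (Nat.find_min hex hj)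
      have hmemD : ∀ k, 1 ≤ k → k ≤ i → p k ∈ D := by
        intro k
        induction k with
        | zero => omega
        | succ m ih =>
          intro _ hle
          rcases Nat.eq_zero_or_pos m with hm | hm
          · rw [hm]; exact hD1
          · exact hDc _ (ih hm (by omega)) _
              (Relation.TransGen.single (hfwd m (by omega)))
      have hiD : p i ∈ D := hmemD i hipos le_rfl
      refine ⟨i, by omega, by omega, Or.inr ⟨⟨?_, hback⟩, hDS _ hiD, ?_⟩⟩
      · have hm : i - 1 + 1 = i := by omega
        have := hfwd (i - 1) (by omega)
        rwa [hm] at this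
      · intro w hw
        exact hDS w (hDc _ hiD w hw)
    · -- p 1 ∉ D
      by_cases hcol : adj (p 2) (p 1)
      · -- p 1 is a collider; block at p 2 ∈ PA(CH(Y)\D)
        have hn3 : 2 < n := by
          rcases Nat.lt_or_ge 2 n with h | h
          · exact h
          · exfalso
            have hn2' : n = 2 := by omega
            have hE2 : p 2 = E := by rw [← hn2']; exact hn
            rw [hE2] at hcol
            exact hD1 (by rw [hD]; exact Or.inl ⟨hYp1, hcol⟩)
        refine ⟨2, by omega, hn3, Or.inl ⟨?_, ?_⟩⟩
        · rintro ⟨h1, _⟩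
          exact h2c _ _ hcol h1
        · rw [hS]; exact Or.inr ⟨p 1, ⟨hYp1, hD1⟩, hcol⟩
      · -- p 1 is a non-collider in CH(Y)\D ⊆ S
        refine ⟨1, by omega, by omega, Or.inl ⟨?_, ?_⟩⟩
        · rintro ⟨_, h2⟩
          exact hcol h2
        · rw [hS]; exact Or.inl (Or.inr ⟨hYp1, hD1⟩)
  · -- first edge p 1 → Y : p 1 ∈ PA(Y) is a non-collider
    rw [h0] at hp1Y
    refine ⟨1, by omega, by omega, Or.inl ⟨?_, ?_⟩⟩
    · rintro ⟨h1, _⟩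
      rw [h0] at h1
      exact h2c _ _ h1 hp1Y
    · rw [hS]; exact Or.inl (Or.inl hp1Y)
end

section
/- Let G be a DAG with distinguished nodes Y and E, where E is a source node and E is not a parent of Y. Define CH_int(Y) = CH(Y) ∩ CH(E) and D = CH_int(Y) ∪ DE(CH_int(Y)). Then Y and E are d-separated in G given the complement of D (i.e., given all nodes other than Y, E, and the nodes in D). -/
/-- With `D = CH_int(Y) ∪ DE(CH_int(Y))` and `CH_int(Y) = CH(Y) ∩ CH(E)`, the nodes `Y` and
`E` are d-separated given the set of all nodes other than `Y`, `E`, and the nodes of `D`. -/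
theorem stmt6 {V : Type*} (adj : V → V → Prop) (Y E : V)
    (hacyc : ∀ v, ¬ Relation.TransGen adj v v)
    (hsource : ∀ v, ¬ adj v E)
    (hEY : ¬ adj E Y) (hne : Y ≠ E) :
    DSep adj Y E
      {v | v ≠ Y ∧ v ≠ E ∧
        v ∉ ({v | adj Y v ∧ adj E v} ∪
             {w | ∃ u, (adj Y u ∧ adj E u) ∧ Relation.TransGen adj u w})} := by
  classical
  intro n p htrail h0 hn
  by_contra hblk
  obtain ⟨hadj, hinj⟩ := htrail
  set D : Set V := {v | adj Y v ∧ adj E v} ∪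
      {w | ∃ u, (adj Y u ∧ adj E u) ∧ Relation.TransGen adj u w} with hDdef
  have two_cycle : ∀ a b : V, adj a b → adj b a → False := fun a b h1 h2 =>
    hacyc a ((Relation.TransGen.single h1).tail h2)
  have hDclosed : ∀ v ∈ D, ∀ w, adj v w → w ∈ D := by
    rintro v (⟨h1, h2⟩ | ⟨u, hu, huv⟩) w hw
    · exact Or.inr ⟨v, ⟨h1, h2⟩, Relation.TransGen.single hw⟩
    · exact Or.inr ⟨u, hu, huv.tail hw⟩
  have hDclosedT : ∀ v ∈ D, ∀ w, Relation.TransGen adj v w → w ∈ D := by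
    intro v hv w hw
    induction hw with
    | single h => exact hDclosed v hv _ h
    | tail _ h ih => exact hDclosed _ ih _ h
  have hDreachY : ∀ v ∈ D, Relation.TransGen adj Y v := by
    rintro v (⟨h1, _⟩ | ⟨u, ⟨h1, _⟩, huv⟩)
    · exact Relation.TransGen.single h1
    · exact (Relation.TransGen.single h1).trans huv
  have hnb : ∀ i, 0 < i → i < n →
      ¬ ((¬ IsCollider adj p i ∧ p i ∈ {v | v ≠ Y ∧ v ≠ E ∧ v ∉ D}) ∨
         (IsCollider adj p i ∧ p i ∉ {v | v ≠ Y ∧ v ≠ E ∧ v ∉ D} ∧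
          ∀ w, Relation.TransGen adj (p i) w → w ∉ {v | v ≠ Y ∧ v ≠ E ∧ v ∉ D})) := by
    intro i h1 h2 h
    exact hblk ⟨i, h1, h2, h⟩
  have hneY : ∀ i, 0 < i → i ≤ n → p i ≠ Y := by
    intro i h1 h2 h
    have := hinj i 0 h2 (Nat.zero_le n) (h.trans h0.symm)
    omega
  have hneE : ∀ i, i < n → p i ≠ E := by
    intro i h1 h
    have := hinj i n (le_of_lt h1) le_rfl (h.trans hn.symm)
    omega
  have nonCollider_mem : ∀ i, 0 < i → i < n → ¬ IsCollider adj p i → p i ∈ D := by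
    intro i h1 h2 hnc
    by_contra h'
    exact hnb i h1 h2 (Or.inl ⟨hnc, hneY i h1 (le_of_lt h2), hneE i h2, h'⟩)
  have collider_not_mem : ∀ i, 0 < i → i < n → IsCollider adj p i → p i ∉ D := by
    intro i h1 h2 hc hmem
    refine hnb i h1 h2 (Or.inr ⟨hc, fun hS => hS.2.2 hmem, fun w hw hS => ?_⟩)
    exact hS.2.2 (hDclosedT _ hmem _ hw)
  -- n ≥ 2
  have hn0 : n ≠ 0 := by
    rintro rfl
    exact hne (h0.symm.trans hn)
  have hn1 : n ≠ 1 := by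
    rintro rfl
    rcases hadj 0 one_pos with h | h
    · rw [h0, hn] at h
      exact hsource Y h
    · rw [h0, hn] at h
      exact hEY h
  have hn2 : 2 ≤ n := by omega
  -- last edge points out of E
  have hlast : adj E (p (n - 1)) := by
    have h := hadj (n - 1) (by omega)
    rw [show n - 1 + 1 = n by omega, hn] at h
    rcases h with h | h
    · exact absurd h (hsource _)
    · exact h
  -- first edge points out of Y
  have hYp1 : adj Y (p 1) := by
    rcases hadj 0 (by omega) with h | h
    · rwa [h0] at h
    · rw [h0] at h
      exfalso
      have hnc : ¬ IsCollider adj p 1 := by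
        rintro ⟨hc1, -⟩
        rw [show (1 : ℕ) - 1 = 0 from rfl, h0] at hc1
        exact two_cycle _ _ hc1 h
      have hmem := nonCollider_mem 1 one_pos (by omega) hnc
      exact hacyc Y ((hDreachY _ hmem).tail h)
  -- first backward edge
  have hex : ∃ k, k < n ∧ adj (p (k + 1)) (p k) := by
    refine ⟨n - 1, by omega, ?_⟩
    rw [show n - 1 + 1 = n by omega, hn]
    exact hlast
  set k := Nat.find hex with hkdef
  obtain ⟨hkn, hkback⟩ := Nat.find_spec hex
  rw [← hkdef] at hkn hkback
  have hP0 : ¬ (0 < n ∧ adj (p 1) (p 0)) := by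
    rintro ⟨-, h⟩
    rw [h0] at h
    exact two_cycle _ _ hYp1 h
  have hk1 : 1 ≤ k := by
    rcases Nat.eq_zero_or_pos k with h | h
    · exfalso
      apply hP0
      rw [h] at hkback
      exact ⟨by omega, hkback⟩
    · exact h
  have hfwd : ∀ i, i < k → adj (p i) (p (i + 1)) := by
    intro i hi
    have hni := Nat.find_min hex hi
    rcases hadj i (lt_trans hi hkn) with h | h
    · exact h
    · exact absurd ⟨lt_trans hi hkn, h⟩ hni
  have hfk1 : adj (p (k - 1)) (p k) := by
    have := hfwd (k - 1) (by omega)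
    rwa [show k - 1 + 1 = k by omega] at this
  have hck : IsCollider adj p k := ⟨hfk1, hkback⟩
  have hknD : p k ∉ D := collider_not_mem k (by omega) hkn hck
  rcases Nat.lt_or_ge k 2 with hk2 | hk2
  · -- k = 1
    have hk : k = 1 := by omega
    rw [hk] at hkback hknD
    rcases Nat.lt_or_ge n 3 with hn3 | hn3
    · -- n = 2, so p 2 = E and p 1 ∈ CH_int
      have hn2' : n = 2 := by omega
      rw [show (1 : ℕ) + 1 = 2 from rfl, show (2 : ℕ) = n by omega, hn] at hkback
      exact hknD (Or.inl ⟨hYp1, hkback⟩)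
    · -- n ≥ 3 : p 2 is an internal non-collider, hence in D, hence p 1 ∈ D
      have hnc2 : ¬ IsCollider adj p 2 := by
        rintro ⟨hc1, -⟩
        rw [show (2 : ℕ) - 1 = 1 from rfl] at hc1
        exact two_cycle _ _ hc1 hkback
      have hD2 := nonCollider_mem 2 (by omega) (by omega) hnc2
      exact hknD (hDclosed _ hD2 _ hkback)
  · -- k ≥ 2 : p (k-1) is an internal non-collider, hence in D, hence p k ∈ D
    have hnck1 : ¬ IsCollider adj p (k - 1) := by
      rintro ⟨-, h2⟩
      rw [show k - 1 + 1 = k by omega] at h2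
      exact two_cycle _ _ hfk1 h2
    have hDk1 := nonCollider_mem (k - 1) (by omega) (by omega) hnck1
    exact hknD (hDclosed _ hDk1 _ hfk1)
end

section
/- Let G₀ be a DAG over nodes {X₁,...,X_d, Y, E} with E a source node and no edge E → Y. Let D₀ = CH_int(Y) ∪ DE_{G₀}(CH_int(Y)) where CH_int(Y) = CH_{G₀}(Y) ∩ CH_{G₀}(E). Let G be obtained from G₀ by adding, for each j ∈ CH_{G₀}(E), edges k → j for k ranging over some set A_j with A_j ⊆ (complement of D₀) \ {Y, E}. Assume G is acyclic. Then D_G = D₀, where D_G is the analogous forbidden set computed in G: every directed path in G from a node of CH_int(Y) stays within D₀. -/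
/-!
Every new edge `k → j` starts at a node `k ∉ D₀`, so `D₀` stays closed under the edges of `G`,
and it still contains `CH_int(Y)`, which is unchanged since no new edge leaves `Y` or `E`.
Hence the descendants of `CH_int(Y)` in `G` remain inside `D₀`; conversely `G₀ ⊆ G`.
-/

open Relation

section

variable {V : Type*}

def descClosure (r : V → V → Prop) (C : Set V) : Set V :=
  C ∪ {w | ∃ u ∈ C, TransGen r u w}

/-- The forbidden set `CH_int(Y) ∪ DE(CH_int(Y))` with `CH_int(Y) = CH(Y) ∩ CH(E)`. -/
def forbiddenSet (r : V → V → Prop) (Y E : V) : Set V :=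
  descClosure r {v | r Y v ∧ r E v}

namespace descClosure

variable {r r₀ : V → V → Prop} {C D : Set V}

theorem mono_rel (h : r₀ ≤ r) : descClosure r₀ C ⊆ descClosure r C := by
  rintro w (hw | ⟨u, hu, huw⟩)
  · exact Or.inl hw
  · exact Or.inr ⟨u, hu, TransGen.mono h u w huw⟩

theorem mem_of_rel {u w : V} (hu : u ∈ descClosure r C) (huw : r u w) :
    w ∈ descClosure r C := by
  rcases hu with hu | ⟨c, hc, hcu⟩
  · exact Or.inr ⟨u, hu, .single huw⟩
  · exact Or.inr ⟨c, hc, hcu.tail huw⟩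

theorem subset_of_closed (hC : C ⊆ D) (hD : ∀ u w, u ∈ D → r u w → w ∈ D) :
    descClosure r C ⊆ D := by
  rintro w (hw | ⟨u, hu, huw⟩)
  · exact hC hw
  · induction huw with
    | single h => exact hD _ _ (hC hu) h
    | tail _ h ih => exact hD _ _ ih h

theorem eq_of_le_of_closed (h : r₀ ≤ r)
    (hclosed : ∀ u w, u ∈ descClosure r₀ C → r u w → w ∈ descClosure r₀ C) :
    descClosure r C = descClosure r₀ C :=
  (subset_of_closed Set.subset_union_left hclosed).antisymm (mono_rel h)

end descClosure

section Augmentation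

variable {adj₀ adj : V → V → Prop} {E : V} {A : V → Set V}
  (hadj : ∀ k j, adj k j ↔ (adj₀ k j ∨ (adj₀ E j ∧ k ∈ A j)))
include hadj

theorem le_of_augment : adj₀ ≤ adj :=
  fun k j h => (hadj k j).2 (Or.inl h)

theorem augment_adj_iff_of_not_mem {k : V} (hk : ∀ j, adj₀ E j → k ∉ A j) (j : V) :
    adj k j ↔ adj₀ k j := by
  rw [hadj]
  exact or_iff_left fun h => hk j h.1 h.2

theorem augment_adj_source_iff (j : V) : adj E j ↔ adj₀ E j := by
  rw [hadj]
  exact or_iff_left_of_imp And.left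

theorem augment_closed {D : Set V} (hA : ∀ j, adj₀ E j → A j ⊆ Dᶜ)
    (hD : ∀ u w, u ∈ D → adj₀ u w → w ∈ D) (u w : V) (hu : u ∈ D) (huw : adj u w) : w ∈ D := by
  rcases (hadj u w).1 huw with h | ⟨hEw, huA⟩
  · exact hD u w hu h
  · exact absurd hu (hA w hEw huA)

end Augmentation

end

theorem stmt8_general {V : Type*} (adj₀ : V → V → Prop) (Y E : V)
    (A : V → Set V)
    (hA : ∀ j, adj₀ E j → A j ⊆
      ({v | adj₀ Y v ∧ adj₀ E v} ∪
        {w | ∃ u, (adj₀ Y u ∧ adj₀ E u) ∧ Relation.TransGen adj₀ u w})ᶜ \ {Y, E})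
    (adj : V → V → Prop)
    (hadj : ∀ k j, adj k j ↔ (adj₀ k j ∨ (adj₀ E j ∧ k ∈ A j))) :
    ({v | adj Y v ∧ adj E v} ∪
      {w | ∃ u, (adj Y u ∧ adj E u) ∧ Relation.TransGen adj u w}) =
    ({v | adj₀ Y v ∧ adj₀ E v} ∪
      {w | ∃ u, (adj₀ Y u ∧ adj₀ E u) ∧ Relation.TransGen adj₀ u w}) := by
  change forbiddenSet adj Y E = forbiddenSet adj₀ Y E
  have hY : ∀ j, adj₀ E j → Y ∉ A j := fun j hj hYA => (hA j hj hYA).2 (Or.inl rfl)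
  have hCH : {v | adj Y v ∧ adj E v} = {v | adj₀ Y v ∧ adj₀ E v} := by
    ext v
    simp only [Set.mem_ofPred_eq, augment_adj_iff_of_not_mem hadj hY,
      augment_adj_source_iff hadj]
  rw [forbiddenSet, forbiddenSet, hCH]
  exact descClosure.eq_of_le_of_closed (le_of_augment hadj) <|
    augment_closed hadj (fun j hj => (hA j hj).trans Set.sdiff_subset)
      fun _ _ => descClosure.mem_of_rel

/-- Augmentation lemma for the forbidden set: let `G₀` be a DAG (`adj₀`) with source node `E`
and no edge `E → Y`, and let `D₀ = CH_int(Y) ∪ DE_{G₀}(CH_int(Y))` with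
`CH_int(Y) = CH_{G₀}(Y) ∩ CH_{G₀}(E)`.  Let `G` (`adj`) add, for each `j ∈ CH_{G₀}(E)`,
edges `k → j` for `k ∈ A j ⊆ D₀ᶜ \ {Y, E}`, and assume `G` is acyclic.  Then the forbidden
set computed in `G` equals `D₀`. -/
theorem stmt8 {V : Type*} (adj₀ : V → V → Prop) (Y E : V)
    (hacyc₀ : ∀ v, ¬ Relation.TransGen adj₀ v v)
    (hsource : ∀ v, ¬ adj₀ v E)
    (hEY : ¬ adj₀ E Y)
    (A : V → Set V)
    (hA : ∀ j, adj₀ E j → A j ⊆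
      ({v | adj₀ Y v ∧ adj₀ E v} ∪
        {w | ∃ u, (adj₀ Y u ∧ adj₀ E u) ∧ Relation.TransGen adj₀ u w})ᶜ \ {Y, E})
    (adj : V → V → Prop)
    (hadj : ∀ k j, adj k j ↔ (adj₀ k j ∨ (adj₀ E j ∧ k ∈ A j)))
    (hacyc : ∀ v, ¬ Relation.TransGen adj v v) :
    ({v | adj Y v ∧ adj E v} ∪
      {w | ∃ u, (adj Y u ∧ adj E u) ∧ Relation.TransGen adj u w}) =
    ({v | adj₀ Y v ∧ adj₀ E v} ∪
      {w | ∃ u, (adj₀ Y u ∧ adj₀ E u) ∧ Relation.TransGen adj₀ u w}) :=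
  stmt8_general adj₀ Y E A hA adj hadj
end
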